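/- arXiv:2008.13322 — 3 statements merged into one kernel-verified Lean document; each statement's English description precedes it below -/
import Mathlib

section
/- For every positive integer n, the number of pairs (a,b) ∈ ℤ² with a² + 2b² = n equals 2·∑_{d ∣ n} χ₈'(d), where χ₈' is the Dirichlet character mod 8 with χ₈'(1) = χ₈'(3) = 1 and χ₈'(5) = χ₈'(7) = −1 (i.e. χ₈' = χ₄·χ₈, the character (−2/·)). -/
open Zsqrtd

local notation "R" => Zsqrtd (-2)

namespace OTS

theorem nn (x : R) : 0 ≤ x.norm := Zsqrtd.norm_nonneg (by norm_num) x

theorem nz {x : R} : x.norm = 0 ↔ x = 0 := Zsqrtd.norm_eq_zero_iff (by norm_num) x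

theorem npos {x : R} (h : x ≠ 0) : 0 < x.norm :=
  lt_of_le_of_ne (nn x) (fun e => h (nz.1 e.symm))

def div2 (x y : R) : R :=
  ⟨round ((x * star y).re / y.norm : ℚ), round ((x * star y).im / y.norm : ℚ)⟩

def mod2 (x y : R) : R := x - y * div2 x y

theorem norm_def' (z : R) : z.norm = z.re * z.re + 2 * (z.im * z.im) := by
  rw [Zsqrtd.norm_def]; ring

theorem mod2_mul_conj (x y : R) :
    mod2 x y * star y = ⟨(x * star y).re - (div2 x y).re * y.norm,
      (x * star y).im - (div2 x y).im * y.norm⟩ := by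
  have h : mod2 x y * star y = x * star y - div2 x y * (y.norm : R) := by
    rw [Zsqrtd.norm_eq_mul_conj, mod2]; ring
  rw [h]
  ext <;> simp [Zsqrtd.re_sub, Zsqrtd.im_sub, Zsqrtd.re_mul, Zsqrtd.im_mul,
    Zsqrtd.re_intCast, Zsqrtd.im_intCast] <;> ring

theorem norm_mod2_lt (x : R) {y : R} (hy : y ≠ 0) : (mod2 x y).norm < y.norm := by
  have hn : (0:ℤ) < y.norm := npos hy
  have hnq : (0:ℚ) < (y.norm : ℚ) := by exact_mod_cast hn
  set c : ℤ := (x * star y).re with hc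
  set d : ℤ := (x * star y).im with hd
  set q1 : ℤ := (div2 x y).re
  set q2 : ℤ := (div2 x y).im
  have key : (mod2 x y).norm * y.norm = (c - q1 * y.norm)^2 + 2 * (d - q2 * y.norm)^2 := by
    have := congrArg Zsqrtd.norm (mod2_mul_conj x y)
    rw [Zsqrtd.norm_mul, Zsqrtd.norm_conj] at this
    rw [this, norm_def']; ring
  have hb : ∀ (a : ℤ) (q : ℤ), q = round ((a:ℚ) / y.norm) →
      |(a : ℚ) - q * y.norm| ≤ y.norm / 2 := by
    intro a q hq
    have h1 : |((a:ℚ) / y.norm - q)| ≤ 1/2 := by rw [hq]; exact abs_sub_round _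
    have e : (a:ℚ) - q * y.norm = ((a:ℚ)/y.norm - q) * y.norm := by field_simp
    rw [e, abs_mul, abs_of_pos hnq]
    calc |((a:ℚ)/y.norm - q)| * (y.norm:ℚ) ≤ 1/2 * (y.norm:ℚ) :=
          mul_le_mul_of_nonneg_right h1 (le_of_lt hnq)
      _ = y.norm / 2 := by ring
  have hb1 : |(c : ℚ) - q1 * y.norm| ≤ y.norm / 2 := hb c q1 rfl
  have hb2 : |(d : ℚ) - q2 * y.norm| ≤ y.norm / 2 := hb d q2 rfl
  have keyq : ((mod2 x y).norm : ℚ) * y.norm ≤ 3/4 * (y.norm * y.norm) := by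
    have e : ((mod2 x y).norm : ℚ) * y.norm
        = ((c:ℚ) - q1 * y.norm)^2 + 2 * ((d:ℚ) - q2 * y.norm)^2 := by
      exact_mod_cast congrArg (fun t : ℤ => (t : ℚ)) key
    rw [e]
    have s1 : ((c:ℚ) - q1 * y.norm)^2 ≤ (y.norm/2)^2 := by
      rw [← sq_abs]; exact pow_le_pow_left₀ (abs_nonneg _) hb1 2
    have s2 : ((d:ℚ) - q2 * y.norm)^2 ≤ (y.norm/2)^2 := by
      rw [← sq_abs]; exact pow_le_pow_left₀ (abs_nonneg _) hb2 2
    nlinarith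
  have : ((mod2 x y).norm : ℚ) < y.norm := by
    have := lt_of_le_of_lt keyq (by nlinarith : (3:ℚ)/4 * (y.norm * y.norm) < y.norm * y.norm)
    exact lt_of_mul_lt_mul_right this (le_of_lt hnq)
  exact_mod_cast this

instance : Nontrivial R := ⟨⟨0, 1, by decide⟩⟩

noncomputable instance euc : EuclideanDomain R :=
  { Zsqrtd.commRing, (inferInstance : Nontrivial R) with
    quotient := div2
    remainder := mod2
    quotient_zero := fun x => by
      have : div2 x 0 = ⟨0,0⟩ := by simp [div2, Zsqrtd.norm]
      rw [this]; rfl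
    quotient_mul_add_remainder_eq := fun x y => by simp only [mod2]; ring
    r := fun a b => a.norm.natAbs < b.norm.natAbs
    r_wellFounded := (measure (Int.natAbs ∘ Zsqrtd.norm)).wf
    remainder_lt := fun a b hb => by
      exact Int.natAbs_lt_natAbs_of_nonneg_of_lt (nn _) (norm_mod2_lt a hb)
    mul_left_not_lt := fun a b hb0 => by
      simp only [not_lt]
      rw [Zsqrtd.norm_mul, Int.natAbs_mul]
      exact Nat.le_mul_of_pos_right _ (by
        have := npos hb0
        omega) }


theorem norm_one_iff {z : R} : z.norm = 1 ↔ z = 1 ∨ z = -1 := by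
  constructor
  · intro h
    rw [norm_def'] at h
    have him : z.im = 0 := by nlinarith [sq_nonneg z.re, sq_nonneg z.im]
    have hre : z.re = 1 ∨ z.re = -1 := by
      rw [him] at h; simp at h
      exact mul_self_eq_one_iff.mp h
    rcases hre with h1 | h1
    · left; ext <;> simp [h1, him]
    · right; ext <;> simp [h1, him]
  · rintro (rfl | rfl) <;> simp [norm_def']

theorem isUnit_iff {z : R} : IsUnit z ↔ z = 1 ∨ z = -1 := by
  rw [← Zsqrtd.norm_eq_one_iff' (by norm_num : (-2:ℤ) ≤ 0), norm_one_iff]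



set_option synthInstance.maxHeartbeats 400000 in
instance : IsDomain R := inferInstance

set_option synthInstance.maxHeartbeats 400000 in
instance : IsPrincipalIdealRing R := inferInstance

set_option synthInstance.maxHeartbeats 400000 in
instance : UniqueFactorizationMonoid R := inferInstance

theorem prime_of_norm_prime {z : R} (h : Prime z.norm) : Prime z := by
  have hirr : Irreducible z := by
    constructor
    · intro hu
      rw [← Zsqrtd.norm_eq_one_iff' (by norm_num : (-2:ℤ) ≤ 0)] at hu
      exact h.ne_one hu
    · intro a b hab
      have hn : z.norm = a.norm * b.norm := by rw [hab, Zsqrtd.norm_mul]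
      rcases h.irreducible.isUnit_or_isUnit hn with h1 | h1
      · left; exact (Zsqrtd.isUnit_iff_norm_isUnit a).2 h1
      · right; exact (Zsqrtd.isUnit_iff_norm_isUnit b).2 h1
  exact hirr.prime

theorem prime_of_norm_eq {z : R} {p : ℕ} (hp : p.Prime) (h : z.norm = p) : Prime z := by
  apply prime_of_norm_prime
  rw [h]
  exact_mod_cast Nat.prime_iff_prime_int.1 hp

theorem norm_sqrtd : (sqrtd : R).norm = 2 := by
  rw [norm_def']; simp [Zsqrtd.re_sqrtd, Zsqrtd.im_sqrtd]

theorem prime_sqrtd : Prime (sqrtd : R) := prime_of_norm_eq Nat.prime_two norm_sqrtd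

theorem star_dvd {x z : R} (h : x ∣ z) : star x ∣ star z := by
  obtain ⟨w, rfl⟩ := h
  exact ⟨star w, by rw [star_mul, mul_comm]⟩

/-- inert primes: if p ∣ a² + 2b² then p ∣ a and p ∣ b -/
theorem inert_dvd {p : ℕ} (hp : p.Prime) (h8 : p % 8 = 5 ∨ p % 8 = 7) {a b : ℤ}
    (h : (p:ℤ) ∣ a^2 + 2*b^2) : (p:ℤ) ∣ a ∧ (p:ℤ) ∣ b := by
  haveI : Fact p.Prime := ⟨hp⟩
  have hp2 : p ≠ 2 := by omega
  have hsq : ¬ IsSquare (-2 : ZMod p) := by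
    rw [ZMod.exists_sq_eq_neg_two_iff hp2]; omega
  have h0 : (a : ZMod p)^2 + 2 * (b : ZMod p)^2 = 0 := by
    have := (ZMod.intCast_zmod_eq_zero_iff_dvd _ p).2 h
    push_cast at this
    linear_combination this
  by_cases hb : (b : ZMod p) = 0
  · have ha : (a : ZMod p) = 0 := by
      have : (a : ZMod p)^2 = 0 := by rw [hb] at h0; simpa using h0
      exact pow_eq_zero_iff (by norm_num : 2 ≠ 0) |>.1 this
    exact ⟨(ZMod.intCast_zmod_eq_zero_iff_dvd a p).1 ha,
      (ZMod.intCast_zmod_eq_zero_iff_dvd b p).1 hb⟩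
  · exfalso
    apply hsq
    refine ⟨(a : ZMod p) * (b : ZMod p)⁻¹, ?_⟩
    have hbi : (b : ZMod p) * (b : ZMod p)⁻¹ = 1 := ZMod.mul_inv_of_unit _ (Ne.isUnit hb)
    field_simp
    linear_combination -h0

/-- split primes: existence of an element of norm p -/
theorem split_exists {p : ℕ} (hp : p.Prime) (h8 : p % 8 = 1 ∨ p % 8 = 3) :
    ∃ π : R, π.norm = p := by
  haveI : Fact p.Prime := ⟨hp⟩
  have hp2 : p ≠ 2 := by omega
  obtain ⟨x, hx⟩ := (ZMod.exists_sq_eq_neg_two_iff hp2).2 h8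
  obtain ⟨a, hdvd⟩ : ∃ a : ℤ, (p:ℤ) ∣ a^2 + 2 := by
    refine ⟨(x.val : ℤ), ?_⟩
    rw [← ZMod.intCast_zmod_eq_zero_iff_dvd]
    push_cast
    have hv : ((x.val : ℕ) : ZMod p) = x := ZMod.natCast_rightInverse x
    rw [hv]
    linear_combination -hx
  have hppr : ¬ Prime ((p:ℕ) : R) := by
    intro hpr
    have hd : ((p:ℕ) : R) ∣ (⟨a, 1⟩ : R) * ⟨a, -1⟩ := by
      have he : ((⟨a, 1⟩ : R) * ⟨a, -1⟩ : R) = ((a^2+2 : ℤ) : R) := by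
        rw [Zsqrtd.intCast_val]
        ext <;> simp [Zsqrtd.re_mul, Zsqrtd.im_mul] <;> ring
      rw [he]
      have : ((p:ℤ) : R) ∣ ((a^2+2 : ℤ) : R) := (Zsqrtd.intCast_dvd_intCast _ _).2 hdvd
      exact_mod_cast this
    have him : ∀ w : R, ((p:ℕ):R) ∣ w → (p:ℤ) ∣ w.im := fun w hw =>
      ((Zsqrtd.intCast_dvd (p:ℤ) w).1 (by exact_mod_cast hw)).2
    have h2le := hp.two_le
    rcases hpr.2.2 _ _ hd with hdv | hdv
    · have h1 := him _ hdv
      have h2 : p ∣ (1:ℕ) := by simpa using Int.natAbs_dvd_natAbs.2 h1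
      have h3 := Nat.le_of_dvd one_pos h2
      omega
    · have h1 := him _ hdv
      have h2 : p ∣ (1:ℕ) := by simpa using Int.natAbs_dvd_natAbs.2 h1
      have h3 := Nat.le_of_dvd one_pos h2
      omega
  have hnu : ¬ IsUnit ((p:ℕ) : R) := by
    rw [isUnit_iff]
    have h2le := hp.two_le
    rintro (h | h)
    · have hre : ((p:ℕ) : R).re = (1 : R).re := by rw [h]
      rw [Zsqrtd.re_natCast, Zsqrtd.re_one] at hre
      omega
    · have hre : ((p:ℕ) : R).re = ((-1 : R)).re := by rw [h]
      rw [Zsqrtd.re_natCast, Zsqrtd.re_neg, Zsqrtd.re_one] at hre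
      omega
  have hnirr : ¬ Irreducible ((p:ℕ) : R) := fun h =>
    hppr ((_root_.irreducible_iff_prime).1 h)
  rw [irreducible_iff] at hnirr
  push_neg at hnirr
  obtain ⟨x', y', hxy, hx', hy'⟩ := hnirr hnu
  have hnorm : x'.norm * y'.norm = (p:ℤ) * p := by
    rw [← Zsqrtd.norm_mul, ← hxy, Zsqrtd.norm_natCast]
  have hppos : (0:ℤ) < p := by exact_mod_cast hp.pos
  have hx0 : x' ≠ 0 := by
    rintro rfl
    rw [zero_mul] at hxy
    have h := congrArg Zsqrtd.norm hxy
    rw [Zsqrtd.norm_natCast, Zsqrtd.norm_zero] at h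
    nlinarith
  have hy0 : y' ≠ 0 := by
    rintro rfl
    rw [mul_zero] at hxy
    have h := congrArg Zsqrtd.norm hxy
    rw [Zsqrtd.norm_natCast, Zsqrtd.norm_zero] at h
    nlinarith
  have hxn : 1 < x'.norm := by
    by_contra hle
    have h1 : x'.norm = 1 := by have := npos hx0; omega
    exact hx' ((Zsqrtd.norm_eq_one_iff' (by norm_num) x').1 h1)
  have hyn : 1 < y'.norm := by
    by_contra hle
    have h1 : y'.norm = 1 := by have := npos hy0; omega
    exact hy' ((Zsqrtd.norm_eq_one_iff' (by norm_num) y').1 h1)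
  refine ⟨x', ?_⟩
  -- x'.norm.natAbs divides p^2, is neither 1 nor p^2
  have hNa : x'.norm.natAbs * y'.norm.natAbs = p^2 := by
    have := congrArg Int.natAbs hnorm
    rw [Int.natAbs_mul] at this
    simpa [sq, Int.natAbs_mul] using this
  have hdvd2 : x'.norm.natAbs ∣ p^2 := ⟨_, hNa.symm⟩
  obtain ⟨j, hj, hjx⟩ := (Nat.dvd_prime_pow hp).1 hdvd2
  have hxnn := nn x'
  have hynn := nn y'
  interval_cases j
  · exfalso; simp at hjx; omega
  · simp only [pow_one] at hjx; omega
  · exfalso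
    rw [hjx] at hNa
    have hpp : 0 < p^2 := pow_pos hp.pos 2
    have h2 : p^2 * y'.norm.natAbs = p^2 * 1 := by simpa using hNa
    have h3 : y'.norm.natAbs = 1 := Nat.eq_of_mul_eq_mul_left hpp h2
    omega


/-- a conjugate of a norm-p element (p odd prime) does not divide it -/
theorem conj_not_dvd {p : ℕ} (hp : p.Prime) (hodd : p ≠ 2) {π : R} (hπ : π.norm = p) :
    ¬ star π ∣ π := by
  intro h
  have h2 : π ∣ star π := by
    have := star_dvd h
    rwa [star_star] at this
  have hassoc : Associated (star π) π := associated_of_dvd_dvd h h2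
  obtain ⟨u, hu⟩ := hassoc
  have hu2 : (u : R) = 1 ∨ (u : R) = -1 := isUnit_iff.1 u.isUnit
  have hp2 : (2:ℤ) ≤ p := by exact_mod_cast hp.two_le
  rcases hu2 with hu1 | hu1
  · rw [hu1, mul_one] at hu
    -- star π = π, so im = 0, norm = re^2 = p
    have him : π.im = 0 := by
      have := congrArg Zsqrtd.im hu
      rw [Zsqrtd.im_star] at this
      omega
    have : π.re * π.re = p := by
      rw [norm_def', him] at hπ
      simpa using hπ
    have hd : π.re.natAbs * π.re.natAbs = p := by
      have := congrArg Int.natAbs this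
      rwa [Int.natAbs_mul, Int.natAbs_natCast] at this
    have hdvd : π.re.natAbs ∣ p := ⟨_, hd.symm⟩
    rcases (Nat.Prime.eq_one_or_self_of_dvd hp _ hdvd) with h1 | h1 <;> rw [h1] at hd <;> nlinarith
  · rw [hu1] at hu
    -- star π * -1 = π, so re = 0, norm = 2 im^2 = p
    have hre : π.re = 0 := by
      have := congrArg Zsqrtd.re hu
      rw [Zsqrtd.re_mul] at this
      simp [Zsqrtd.re_star] at this
      omega
    have h2p : 2 * (π.im * π.im) = (p:ℤ) := by
      rw [norm_def', hre] at hπ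
      simpa using hπ
    have : (2:ℤ) ∣ p := ⟨_, h2p.symm⟩
    have : (2:ℕ) ∣ p := by exact_mod_cast this
    exact hodd ((Nat.Prime.eq_one_or_self_of_dvd hp _ this).resolve_left (by norm_num)).symm

/-- The solution set -/
def S (n : ℕ) : Set R := {z : R | z.norm = n}

theorem S_finite (n : ℕ) : (S n).Finite := by
  have hsub : S n ⊆ (fun q : ℤ × ℤ => (⟨q.1, q.2⟩ : R)) ''
      (Set.Icc (-(n:ℤ)) n ×ˢ Set.Icc (-(n:ℤ)) n) := by
    intro z hz
    have hz' : z.re * z.re + 2 * (z.im * z.im) = (n:ℤ) := by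
      rw [← norm_def']; exact hz
    have hn2 : (n:ℤ) ≤ (n:ℤ)*(n:ℤ) := by
      have : (0:ℤ) ≤ n := Int.natCast_nonneg n
      nlinarith
    have h1 : -(n:ℤ) ≤ z.re ∧ z.re ≤ n := by
      constructor <;> nlinarith [sq_nonneg (z.re + n), sq_nonneg (z.re - n), sq_nonneg z.im]
    have h2 : -(n:ℤ) ≤ z.im ∧ z.im ≤ n := by
      constructor <;> nlinarith [sq_nonneg (z.im + n), sq_nonneg (z.im - n), sq_nonneg z.re]
    exact ⟨(z.re, z.im), ⟨⟨h1.1, h1.2⟩, ⟨h2.1, h2.2⟩⟩, by ext <;> rfl⟩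
  exact Set.Finite.subset (Set.Finite.image _ ((Set.finite_Icc _ _).prod (Set.finite_Icc _ _))) hsub

theorem S_one : (S 1).ncard = 2 := by
  have : S 1 = {1, -1} := by
    ext z
    simp only [S, Set.mem_setOf_eq, Set.mem_insert_iff, Set.mem_singleton_iff]
    rw [show ((1:ℕ):ℤ) = 1 by norm_num]
    exact norm_one_iff
  rw [this]
  rw [Set.ncard_pair (by decide : (1 : R) ≠ -1)]

/-- counting via multiplication by a fixed element -/
theorem ncard_inter (c : R) (a n : ℕ) (hc : c.norm = a) (ha0 : 0 < a) :
    {z : R | z.norm = (a * n : ℕ) ∧ c ∣ z}.ncard = (S n).ncard := by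
  have hcne : c ≠ 0 := by
    intro h
    rw [h, Zsqrtd.norm_zero] at hc
    exact absurd hc.symm (by exact_mod_cast ha0.ne')
  have himg : {z : R | z.norm = (a*n:ℕ) ∧ c ∣ z} = (c * ·) '' S n := by
    ext z
    constructor
    · rintro ⟨hz, w, rfl⟩
      refine ⟨w, ?_, rfl⟩
      have h1 : (a:ℤ) * w.norm = (a:ℤ) * n := by
        have := hz
        rw [Zsqrtd.norm_mul, hc] at this
        push_cast at this ⊢
        linarith
      have ha' : (a:ℤ) ≠ 0 := by exact_mod_cast ha0.ne'
      exact mul_left_cancel₀ ha' h1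
    · rintro ⟨w, hw, rfl⟩
      refine ⟨?_, Dvd.intro _ rfl⟩
      rw [Zsqrtd.norm_mul, hc, hw]
      push_cast
      ring
  rw [himg, Set.ncard_image_of_injective _ (mul_right_injective₀ hcne)]

theorem ncard_S_all (c : R) (a n : ℕ) (hc : c.norm = a) (ha0 : 0 < a)
    (hdvd : ∀ z : R, z.norm = (a*n:ℕ) → c ∣ z) : (S (a*n)).ncard = (S n).ncard := by
  have : S (a*n) = {z : R | z.norm = (a*n:ℕ) ∧ c ∣ z} := by
    ext z
    exact ⟨fun h => ⟨h, hdvd z h⟩, fun h => h.1⟩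
  rw [this, ncard_inter c a n hc ha0]


theorem two_rec (n : ℕ) : (S (2 * n)).ncard = (S n).ncard := by
  apply ncard_S_all sqrtd 2 n norm_sqrtd (by norm_num)
  intro z hz
  -- z.re is even
  have hz' : z.re * z.re + 2 * (z.im * z.im) = ((2*n : ℕ) : ℤ) := by
    rw [← norm_def']; exact hz
  have heven : Even z.re := by
    have h2 : Even (z.re * z.re) := by
      refine ⟨(n:ℤ) - z.im * z.im, ?_⟩
      push_cast at hz' ⊢
      linarith
    exact (Int.even_mul.1 h2).elim id id
  obtain ⟨c, hc⟩ := heven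
  exact ⟨⟨z.im, -c⟩, by ext <;> simp [Zsqrtd.re_mul, Zsqrtd.im_mul, Zsqrtd.re_sqrtd, Zsqrtd.im_sqrtd] <;> omega⟩

theorem inert_z_dvd {p : ℕ} (hp : p.Prime) (h8 : p % 8 = 5 ∨ p % 8 = 7) {z : R}
    (h : (p:ℤ) ∣ z.norm) : ((p:ℕ):R) ∣ z := by
  have h' : (p:ℤ) ∣ z.re^2 + 2*z.im^2 := by
    rw [show z.re^2 + 2*z.im^2 = z.norm by rw [norm_def']; ring]
    exact h
  obtain ⟨h1, h2⟩ := inert_dvd hp h8 h'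
  have : ((p:ℤ):R) ∣ z := (Zsqrtd.intCast_dvd _ _).2 ⟨h1, h2⟩
  exact_mod_cast this

theorem inert_rec {p : ℕ} (hp : p.Prime) (h8 : p % 8 = 5 ∨ p % 8 = 7) (n : ℕ) :
    (S (p * p * n)).ncard = (S n).ncard := by
  apply ncard_S_all ((p:ℕ):R) (p*p) n (by rw [Zsqrtd.norm_natCast]; push_cast; ring)
    (Nat.mul_pos hp.pos hp.pos)
  intro z hz
  apply inert_z_dvd hp h8
  rw [hz]
  push_cast
  exact ⟨(p:ℤ)*n, by ring⟩

theorem inert_empty {p m : ℕ} (hp : p.Prime) (h8 : p % 8 = 5 ∨ p % 8 = 7) (hpm : ¬ p ∣ m) :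
    S (p * m) = ∅ := by
  ext z
  simp only [S, Set.mem_setOf_eq, Set.mem_empty_iff_false, iff_false]
  intro hz
  have hdvd : ((p:ℕ):R) ∣ z := by
    apply inert_z_dvd hp h8
    rw [hz]; push_cast; exact ⟨(m:ℤ), by ring⟩
  obtain ⟨w, rfl⟩ := hdvd
  rw [Zsqrtd.norm_mul, Zsqrtd.norm_natCast] at hz
  have hpos : (0:ℤ) < p := by exact_mod_cast hp.pos
  have hmd : (m:ℤ) = p * w.norm := by
    have : (p:ℤ) * (p * w.norm) = p * m := by push_cast at hz ⊢; linarith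
    exact (mul_left_cancel₀ hpos.ne' this).symm
  have hmd2 : (p:ℤ) ∣ (m:ℤ) := ⟨w.norm, hmd⟩
  exact hpm (by exact_mod_cast hmd2)

/-- π divides z or star π divides z, when norm z is divisible by p = norm π -/
theorem pi_or_conj_dvd {p : ℕ} {π : R} (hp : p.Prime) (hπ : π.norm = p) {z : R}
    (h : (p:ℕ) ∣ z.norm.natAbs) : π ∣ z ∨ star π ∣ z := by
  have hπp : Prime π := prime_of_norm_eq hp hπ
  have hdvd : π ∣ z * star z := by
    have h1 : π ∣ ((p:ℕ) : R) := ⟨star π, by rw [← Zsqrtd.norm_eq_mul_conj, hπ]; push_cast; rfl⟩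
    have hzn : (p:ℤ) ∣ z.norm := by
      rw [← Int.natAbs_of_nonneg (nn z)]
      exact_mod_cast h
    have h2 : ((p:ℕ):R) ∣ ((z.norm : ℤ) : R) := by
      have h3 : ((p:ℤ) : R) ∣ ((z.norm : ℤ) : R) := (Zsqrtd.intCast_dvd_intCast (p:ℤ) z.norm).2 hzn
      exact_mod_cast h3
    rw [← Zsqrtd.norm_eq_mul_conj]
    exact h1.trans h2
  rcases hπp.2.2 _ _ hdvd with h1 | h1
  · exact Or.inl h1
  · right
    have := star_dvd h1
    rwa [star_star] at this


theorem pi_dvd_p {p : ℕ} {π : R} (hπ : π.norm = p) : π ∣ ((p:ℕ):R) := by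
  refine ⟨star π, ?_⟩
  rw [← Zsqrtd.norm_eq_mul_conj, hπ]
  norm_cast

theorem conj_pi_dvd_p {p : ℕ} {π : R} (hπ : π.norm = p) : star π ∣ ((p:ℕ):R) := by
  refine ⟨π, ?_⟩
  rw [mul_comm, ← Zsqrtd.norm_eq_mul_conj, hπ]
  norm_cast

theorem pi_conj_to_p {p : ℕ} {π : R} (hp : p.Prime) (hodd : p ≠ 2) (hπ : π.norm = p) {z : R}
    (h1 : π ∣ z) (h2 : star π ∣ z) : ((p:ℕ):R) ∣ z := by
  obtain ⟨w, rfl⟩ := h1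
  have hsp : Prime (star π) := prime_of_norm_eq hp (by rw [Zsqrtd.norm_conj]; exact hπ)
  have hw : star π ∣ w := (hsp.2.2 _ _ h2).resolve_left (conj_not_dvd hp hodd hπ)
  obtain ⟨v, rfl⟩ := hw
  refine ⟨v, ?_⟩
  rw [← mul_assoc, ← Zsqrtd.norm_eq_mul_conj, hπ]
  norm_cast

theorem not_p_dvd {p m : ℕ} (hp : p.Prime) (hpm : ¬ p ∣ m) {z : R}
    (hz : z.norm = ((p*m:ℕ):ℤ)) : ¬ ((p:ℕ):R) ∣ z := by
  rintro ⟨w, rfl⟩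
  rw [Zsqrtd.norm_mul, Zsqrtd.norm_natCast] at hz
  have hpos : (0:ℤ) < p := by exact_mod_cast hp.pos
  have hmd : (m:ℤ) = p * w.norm := by
    have : (p:ℤ) * (p * w.norm) = p * m := by push_cast at hz ⊢; linarith
    exact (mul_left_cancel₀ hpos.ne' this).symm
  have hmd2 : (p:ℤ) ∣ (m:ℤ) := ⟨w.norm, hmd⟩
  exact hpm (by exact_mod_cast hmd2)

theorem split_cover {p k : ℕ} {π : R} (hp : p.Prime) (hπ : π.norm = p) (hk : p ∣ k) :
    S k = {z : R | z.norm = ((k:ℕ):ℤ) ∧ π ∣ z} ∪ {z : R | z.norm = ((k:ℕ):ℤ) ∧ star π ∣ z} := by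
  ext z
  simp only [S, Set.mem_setOf_eq, Set.mem_union]
  constructor
  · intro hz
    have hnat : p ∣ z.norm.natAbs := by
      have : z.norm.natAbs = k := by rw [hz]; exact Int.natAbs_natCast k
      rw [this]; exact hk
    rcases pi_or_conj_dvd hp hπ hnat with h | h
    · exact Or.inl ⟨hz, h⟩
    · exact Or.inr ⟨hz, h⟩
  · rintro (⟨h, _⟩ | ⟨h, _⟩) <;> exact h

theorem split_base {p m : ℕ} (hp : p.Prime) (hodd : p ≠ 2) {π : R} (hπ : π.norm = p)
    (hpm : ¬ p ∣ m) : (S (p * m)).ncard = 2 * (S m).ncard := by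
  set A := {z : R | z.norm = ((p*m:ℕ):ℤ) ∧ π ∣ z} with hA
  set B := {z : R | z.norm = ((p*m:ℕ):ℤ) ∧ star π ∣ z} with hB
  have hcov : S (p*m) = A ∪ B := split_cover hp hπ ⟨m, rfl⟩
  have hdisj : Disjoint A B := by
    rw [Set.disjoint_left]
    rintro z ⟨hz, h1⟩ ⟨_, h2⟩
    exact not_p_dvd hp hpm hz (pi_conj_to_p hp hodd hπ h1 h2)
  have finA : A.Finite := (S_finite (p*m)).subset (by rw [hcov]; exact Set.subset_union_left)
  have finB : B.Finite := (S_finite (p*m)).subset (by rw [hcov]; exact Set.subset_union_right)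
  have hAcard : A.ncard = (S m).ncard := ncard_inter π p m hπ hp.pos
  have hBcard : B.ncard = (S m).ncard :=
    ncard_inter (star π) p m (by rw [Zsqrtd.norm_conj]; exact hπ) hp.pos
  rw [hcov, Set.ncard_union_eq hdisj finA finB, hAcard, hBcard, two_mul]

theorem split_rec {p n : ℕ} (hp : p.Prime) (hodd : p ≠ 2) {π : R} (hπ : π.norm = p) :
    (S (p*(p*n))).ncard + (S n).ncard = 2 * (S (p*n)).ncard := by
  set A := {z : R | z.norm = ((p*(p*n):ℕ):ℤ) ∧ π ∣ z} with hA
  set B := {z : R | z.norm = ((p*(p*n):ℕ):ℤ) ∧ star π ∣ z} with hB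
  have hcov : S (p*(p*n)) = A ∪ B := split_cover hp hπ ⟨p*n, rfl⟩
  have finA : A.Finite := (S_finite _).subset (by rw [hcov]; exact Set.subset_union_left)
  have finB : B.Finite := (S_finite _).subset (by rw [hcov]; exact Set.subset_union_right)
  have hAB : A ∩ B = {z : R | z.norm = ((p*p*n:ℕ):ℤ) ∧ ((p:ℕ):R) ∣ z} := by
    ext z
    simp only [hA, hB, Set.mem_inter_iff, Set.mem_setOf_eq]
    constructor
    · rintro ⟨⟨hz, h1⟩, ⟨_, h2⟩⟩
      refine ⟨by rw [show p*p*n = p*(p*n) by ring]; exact hz, pi_conj_to_p hp hodd hπ h1 h2⟩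
    · rintro ⟨hz, hd⟩
      have h1 : π ∣ z := dvd_trans (pi_dvd_p hπ) hd
      have h2 : star π ∣ z := dvd_trans (conj_pi_dvd_p hπ) hd
      exact ⟨⟨by rw [show p*(p*n) = p*p*n by ring]; exact hz, h1⟩,
        ⟨by rw [show p*(p*n) = p*p*n by ring]; exact hz, h2⟩⟩
  have hABcard : (A ∩ B).ncard = (S n).ncard := by
    rw [hAB]
    exact ncard_inter ((p:ℕ):R) (p*p) n
      (by rw [Zsqrtd.norm_natCast]; push_cast; ring) (Nat.mul_pos hp.pos hp.pos)
  have hAcard : A.ncard = (S (p*n)).ncard := ncard_inter π p (p*n) hπ hp.pos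
  have hBcard : B.ncard = (S (p*n)).ncard :=
    ncard_inter (star π) p (p*n) (by rw [Zsqrtd.norm_conj]; exact hπ) hp.pos
  have hie := Set.ncard_union_add_ncard_inter A B finA finB
  rw [← hcov] at hie
  rw [← hABcard, hie, hAcard, hBcard, two_mul]


/-- the character χ₈' -/
def chi (n : ℕ) : ℤ :=
  if n % 8 = 1 ∨ n % 8 = 3 then 1 else if n % 8 = 5 ∨ n % 8 = 7 then -1 else 0

theorem chi_one : chi 1 = 1 := by norm_num [chi]

theorem chi_mul (m n : ℕ) : chi (m * n) = chi m * chi n := by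
  unfold chi
  rw [Nat.mul_mod]
  obtain ⟨a, ha, hae⟩ : ∃ a, a < 8 ∧ m % 8 = a := ⟨m % 8, Nat.mod_lt _ (by norm_num), rfl⟩
  obtain ⟨b, hb, hbe⟩ : ∃ b, b < 8 ∧ n % 8 = b := ⟨n % 8, Nat.mod_lt _ (by norm_num), rfl⟩
  rw [hae, hbe]
  interval_cases a <;> interval_cases b <;> decide

theorem chi_pow (p k : ℕ) : chi (p ^ k) = chi p ^ k := by
  induction k with
  | zero => simpa using chi_one
  | succ k ih => rw [pow_succ, chi_mul, ih, pow_succ]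

open ArithmeticFunction in
/-- the divisor sum of chi -/
def Gs (n : ℕ) : ℤ := ∑ d ∈ n.divisors, chi d

theorem Gs_one : Gs 1 = 1 := by simp [Gs, Nat.divisors_one, chi_one]

open ArithmeticFunction ArithmeticFunction.zeta in
theorem Gs_mul {m n : ℕ} (h : m.Coprime n) : Gs (m * n) = Gs m * Gs n := by
  have hX0 : chi 0 = 0 := by norm_num [chi]
  set X : ArithmeticFunction ℤ := ⟨fun n => chi n, hX0⟩ with hXdef
  have hXm : X.IsMultiplicative := ⟨chi_one, fun {a b} _ => chi_mul a b⟩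
  have hmult : (↑(ζ : ArithmeticFunction ℕ) * X : ArithmeticFunction ℤ).IsMultiplicative :=
    isMultiplicative_zeta.natCast.mul hXm
  have hGs : ∀ t : ℕ, Gs t = (↑(ζ : ArithmeticFunction ℕ) * X : ArithmeticFunction ℤ) t := by
    intro t
    rw [coe_zeta_mul_apply]
    rfl
  rw [hGs, hGs, hGs, hmult.map_mul_of_coprime h]

theorem Gs_prime_pow {p : ℕ} (hp : p.Prime) (k : ℕ) :
    Gs (p ^ k) = ∑ j ∈ Finset.range (k + 1), chi p ^ j := by
  unfold Gs
  rw [Nat.sum_divisors_prime_pow hp]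
  exact Finset.sum_congr rfl fun j _ => chi_pow p j


theorem count_pow_two (k m : ℕ) : (S (2 ^ k * m)).ncard = (S m).ncard := by
  induction k with
  | zero => rw [pow_zero, one_mul]
  | succ k ih => rw [show 2^(k+1)*m = 2*(2^k*m) by ring, two_rec]; exact ih

theorem inert_even {p : ℕ} (hp : p.Prime) (h8 : p % 8 = 5 ∨ p % 8 = 7) (m : ℕ) (j : ℕ) :
    (S (p ^ (2*j) * m)).ncard = (S m).ncard := by
  induction j with
  | zero => rw [pow_zero, one_mul]
  | succ j ih => rw [show p^(2*(j+1))*m = p*p*(p^(2*j)*m) by ring, inert_rec hp h8]; exact ih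

theorem inert_odd {p : ℕ} (hp : p.Prime) (h8 : p % 8 = 5 ∨ p % 8 = 7) {m : ℕ} (hpm : ¬ p ∣ m)
    (j : ℕ) : (S (p ^ (2*j+1) * m)).ncard = 0 := by
  induction j with
  | zero =>
    rw [show p^(2*0+1)*m = p*m by ring, inert_empty hp h8 hpm]
    exact Set.ncard_empty _
  | succ j ih => rw [show p^(2*(j+1)+1)*m = p*p*(p^(2*j+1)*m) by ring, inert_rec hp h8]; exact ih

theorem split_count {p : ℕ} (hp : p.Prime) (hodd : p ≠ 2) {π : R} (hπ : π.norm = p)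
    {m : ℕ} (hpm : ¬ p ∣ m) : ∀ k : ℕ, ((S (p ^ k * m)).ncard : ℤ) = (k+1) * (S m).ncard := by
  intro k
  induction k using Nat.strong_induction_on with
  | _ k ih =>
    match k, ih with
    | 0, _ => rw [pow_zero, one_mul]; push_cast; ring
    | 1, _ =>
      rw [pow_one, split_base hp hodd hπ hpm]
      push_cast; ring
    | (k+2), ih =>
      have h1 := ih (k+1) (by omega)
      have h2 := ih k (by omega)
      have hrec := split_rec (n := p^k * m) (p := p) hp hodd hπ
      have hZ : ((S (p*(p*(p^k*m)))).ncard : ℤ) + ((S (p^k*m)).ncard : ℤ)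
          = 2 * ((S (p*(p^k*m))).ncard : ℤ) := by exact_mod_cast hrec
      have e1 : p^(k+2)*m = p*(p*(p^k*m)) := by ring
      have e2 : p^(k+1)*m = p*(p^k*m) := by ring
      rw [e2] at h1
      rw [e1]
      push_cast at h1 h2 hZ ⊢
      linarith

theorem Gs_two_pow (k : ℕ) : Gs (2 ^ k) = 1 := by
  rw [Gs_prime_pow Nat.prime_two]
  have hc : chi 2 = 0 := by norm_num [chi]
  rw [hc]
  induction k with
  | zero => simp
  | succ k ih => rw [Finset.sum_range_succ, ih]; simp

theorem Gs_split_pow {p : ℕ} (hp : p.Prime) (h8 : p % 8 = 1 ∨ p % 8 = 3) (k : ℕ) :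
    Gs (p ^ k) = k + 1 := by
  rw [Gs_prime_pow hp]
  have hc : chi p = 1 := by unfold chi; rw [if_pos h8]
  rw [hc]
  simp

theorem Gs_inert_pow {p : ℕ} (hp : p.Prime) (h8 : p % 8 = 5 ∨ p % 8 = 7) (k : ℕ) :
    Gs (p ^ k) = if Even k then 1 else 0 := by
  rw [Gs_prime_pow hp]
  have hc : chi p = -1 := by
    unfold chi
    rw [if_neg (by omega), if_pos h8]
  rw [hc, neg_one_geom_sum]
  simp only [Nat.even_add_one]
  rcases Nat.even_or_odd k with h | h
  · rw [if_neg (by simpa using h), if_pos h]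
  · rw [if_pos (by simpa using h), if_neg (Nat.not_even_iff_odd.2 h)]

theorem main_count : ∀ n : ℕ, 0 < n → ((S n).ncard : ℤ) = 2 * Gs n := by
  intro n
  induction n using Nat.strong_induction_on with
  | _ n ih =>
    intro hn
    rcases eq_or_lt_of_le (show 1 ≤ n from hn) with h1 | h1
    · rw [← h1, S_one, Gs_one]; norm_num
    · -- n ≥ 2
      have hn1 : n ≠ 1 := by omega
      have hn0 : n ≠ 0 := by omega
      set p := n.minFac with hpdef
      have hp : p.Prime := Nat.minFac_prime hn1
      set k := n.factorization p with hkdef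
      set m := n / p^k with hmdef
      have hnm : p^k * m = n := Nat.ordProj_mul_ordCompl_eq_self n p
      have hpm : ¬ p ∣ m := Nat.not_dvd_ordCompl hp hn0
      have hk1 : 1 ≤ k := by
        rw [hkdef]
        exact (Nat.Prime.factorization_pos_of_dvd hp hn0 (Nat.minFac_dvd n))
      have hm0 : 0 < m := Nat.ordCompl_pos p hn0
      have hpk2 : 2 ≤ p^k := by
        calc 2 ≤ p := hp.two_le
        _ = p^1 := (pow_one p).symm
        _ ≤ p^k := Nat.pow_le_pow_right hp.pos hk1
      have hmn : m < n := by
        calc m < 2 * m := by omega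
        _ ≤ p^k * m := Nat.mul_le_mul_right m hpk2
        _ = n := hnm
      have hGm := ih m hmn hm0
      have hcop : (p^k).Coprime m :=
        Nat.Coprime.pow_left _ ((Nat.Prime.coprime_iff_not_dvd hp).2 hpm)
      rw [← hnm, Gs_mul hcop]
      rcases eq_or_ne p 2 with hp2 | hp2
      · rw [hp2] at *
        rw [count_pow_two k m, Gs_two_pow, hGm]
        ring
      · have hodd : p % 2 = 1 := Nat.odd_iff.1 (hp.eq_two_or_odd'.resolve_left hp2)
        have h8 : p % 8 = 1 ∨ p % 8 = 3 ∨ p % 8 = 5 ∨ p % 8 = 7 := by omega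
        rcases h8 with h8 | h8 | h8 | h8
        · obtain ⟨π, hπ⟩ := split_exists hp (Or.inl h8)
          rw [split_count hp hp2 hπ hpm k, Gs_split_pow hp (Or.inl h8), hGm]
          ring
        · obtain ⟨π, hπ⟩ := split_exists hp (Or.inr h8)
          rw [split_count hp hp2 hπ hpm k, Gs_split_pow hp (Or.inr h8), hGm]
          ring
        · rcases Nat.even_or_odd k with hk | hk
          · obtain ⟨j, hj⟩ := hk
            rw [show k = 2*j by omega, inert_even hp (Or.inl h8) m j,
              Gs_inert_pow hp (Or.inl h8), if_pos (by exact ⟨j, by omega⟩), hGm]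
            ring
          · obtain ⟨j, hj⟩ := hk
            rw [show k = 2*j+1 by omega, inert_odd hp (Or.inl h8) hpm j,
              Gs_inert_pow hp (Or.inl h8), if_neg (by rw [Nat.even_iff]; omega)]
            push_cast; ring
        · rcases Nat.even_or_odd k with hk | hk
          · obtain ⟨j, hj⟩ := hk
            rw [show k = 2*j by omega, inert_even hp (Or.inr h8) m j,
              Gs_inert_pow hp (Or.inr h8), if_pos (by exact ⟨j, by omega⟩), hGm]
            ring
          · obtain ⟨j, hj⟩ := hk
            rw [show k = 2*j+1 by omega, inert_odd hp (Or.inr h8) hpm j,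
              Gs_inert_pow hp (Or.inr h8), if_neg (by rw [Nat.even_iff]; omega)]
            push_cast; ring

end OTS

open OTS in
/-- #{(a,b) ∈ ℤ² : a²+2b² = n} = 2·∑_{d∣n} χ₄χ₈(d), where χ₄χ₈ = (−2/·)
is the character mod 8 taking 1 on 1,3 and −1 on 5,7. -/
theorem one_two_square_theorem (n : ℕ) (hn : 0 < n) :
    (({p : ℤ × ℤ | p.1 ^ 2 + 2 * p.2 ^ 2 = (n : ℤ)}.ncard : ℤ)) =
      2 * ∑ d ∈ n.divisors,
        (if d % 8 = 1 ∨ d % 8 = 3 then (1 : ℤ)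
          else if d % 8 = 5 ∨ d % 8 = 7 then -1 else 0) := by
  have hmain := main_count n hn
  have hinj : Function.Injective (fun q : ℤ × ℤ => (⟨q.1, q.2⟩ : Zsqrtd (-2))) := by
    intro a b h
    have h1 := congrArg Zsqrtd.re h
    have h2 := congrArg Zsqrtd.im h
    exact Prod.ext h1 h2
  have himg : (fun q : ℤ × ℤ => (⟨q.1, q.2⟩ : Zsqrtd (-2))) ''
      {p : ℤ × ℤ | p.1 ^ 2 + 2 * p.2 ^ 2 = (n : ℤ)} = S n := by
    ext z
    constructor
    · rintro ⟨⟨a, b⟩, h, rfl⟩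
      simp only [Set.mem_setOf_eq] at h
      show Zsqrtd.norm _ = _
      rw [norm_def']
      simp only []
      linear_combination h
    · intro hz
      refine ⟨(z.re, z.im), ?_, by ext <;> rfl⟩
      simp only [Set.mem_setOf_eq]
      have hz' : z.norm = (n:ℤ) := hz
      rw [norm_def'] at hz'
      linear_combination hz'
  have hcard := Set.ncard_image_of_injective
    {p : ℤ × ℤ | p.1 ^ 2 + 2 * p.2 ^ 2 = (n : ℤ)} hinj
  rw [himg] at hcard
  rw [hcard] at hmain
  rw [hmain]
  rfl
end

section
/- For |z| < |ω| (complex numbers, ω ≠ 0), one has 1/(z+ω)² − 1/ω² = ∑_{n≥1} (−1)ⁿ (n+1) zⁿ/ω^{n+2}, and consequently the Weierstrass function ℘_τ(z) = 1/z² + ∑_{ω∈Λ_τ∖{0}} (1/(z+ω)² − 1/ω²) has Laurent expansion ℘_τ(z) = 1/z² + 2∑_{n even, n≥2} 𝓔_{n+2}(τ) zⁿ for 0 < |z| < min{|ω| : ω ∈ Λ_τ∖{0}}, where 𝓔_m(τ) = ((m−1)/2)∑_{ω∈Λ_τ∖{0}} ω^{−m}. -/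
open Complex

/-- 𝓔_m(τ) = ((m−1)/2)·∑_{ω ∈ Λ_τ∖{0}} ω^{−m}, where Λ_τ = τℤ + ℤ. -/
noncomputable def calE (τ : ℂ) (m : ℕ) : ℂ :=
  (((m : ℂ) - 1) / 2) *
    ∑' p : {p : ℤ × ℤ // p ≠ 0}, ((p.1.1 : ℂ) * τ + (p.1.2 : ℂ)) ^ (-(m : ℤ))


lemma partA {z ω : ℂ} (hω : ω ≠ 0) (h : ‖z‖ < ‖ω‖) :
    HasSum (fun n : ℕ => (-1:ℂ)^(n+1) * ((n:ℂ)+2) * z^(n+1) / ω^(n+3))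
      (1/(z+ω)^2 - 1/ω^2) := by
  have hzω : z + ω ≠ 0 := by
    intro hc
    have hz : z = -ω := by linear_combination hc
    rw [hz] at h
    simp at h
  set r : ℂ := -z / ω with hrdef
  have hr : ‖r‖ < 1 := by
    rw [hrdef]
    simp only [norm_div, norm_neg]
    rw [div_lt_one (norm_pos_iff.mpr hω)]
    exact h
  have h1 : HasSum (fun n : ℕ => (n:ℂ) * r^n) (r/(1-r)^2) :=
    hasSum_coe_mul_geometric_of_norm_lt_one hr
  have h2 : HasSum (fun n : ℕ => r^n) ((1-r)⁻¹) := hasSum_geometric_of_norm_lt_one hr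
  have h4 := (h1.add h2).div_const (ω^2)
  have h1r : (1:ℂ) - r = (z + ω)/ω := by
    rw [hrdef]; field_simp; ring
  have hne : (1:ℂ) - r ≠ 0 := by rw [h1r]; exact div_ne_zero hzω hω
  have e1 : r/(1-r)^2 + (1-r)⁻¹ = 1/(1-r)^2 := by
    field_simp
    ring
  have hS : (r/(1-r)^2 + (1-r)⁻¹)/ω^2 = 1/(z+ω)^2 := by
    rw [e1, h1r, div_pow]
    field_simp
  rw [hS] at h4
  have h4' : HasSum (fun n : ℕ => ((n:ℂ)+1) * r^n / ω^2) (1/(z+ω)^2) :=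
    h4.congr_fun (fun n => by push_cast; ring)
  have h5 := (hasSum_nat_add_iff' (f := fun n : ℕ => ((n:ℂ)+1) * r^n / ω^2) 1).mpr h4'
  simp only [Finset.range_one, Finset.sum_singleton, Nat.cast_zero, pow_zero] at h5
  rw [show ((0:ℂ) + 1) * 1 / ω^2 = 1/ω^2 by ring] at h5
  refine h5.congr_fun fun n => ?_
  rw [hrdef, neg_div, neg_pow (z/ω) (n+1), div_pow]
  push_cast
  field_simp
  ring

lemma vec_ne_zero {p : ℤ × ℤ} (hp : p ≠ 0) : ![p.1, p.2] ≠ 0 := by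
  intro hc
  apply hp
  have h0 := congrFun hc 0
  have h1 := congrFun hc 1
  simp at h0 h1
  exact Prod.ext h0 h1

lemma omega_lower {τ : ℂ} (hτ : 0 < τ.im) {p : ℤ × ℤ} (hp : p ≠ 0) :
    EisensteinSeries.r ⟨τ, hτ⟩ * ((max p.1.natAbs p.2.natAbs : ℕ) : ℝ)
      ≤ ‖(p.1 : ℂ) * τ + (p.2 : ℂ)‖ := by
  have h := EisensteinSeries.r_mul_max_le (z := ⟨τ, hτ⟩) (vec_ne_zero hp)
  rw [EisensteinSeries.norm_eq_max_natAbs] at h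
  simpa [UpperHalfPlane.coe] using h

lemma natAbs_max_pos {p : ℤ × ℤ} (hp : p ≠ 0) : 1 ≤ max p.1.natAbs p.2.natAbs := by
  rcases p with ⟨a, b⟩
  have : ¬(a = 0 ∧ b = 0) := by simpa [Prod.ext_iff] using hp
  rcases Decidable.not_and_iff_or_not.mp this with h | h
  · exact le_max_of_le_left (by omega)
  · exact le_max_of_le_right (by omega)

lemma exists_unif_bound {τ : ℂ} (hτ : 0 < τ.im) {z : ℂ}
    (hlt : ∀ p : ℤ × ℤ, p ≠ 0 → ‖z‖ < ‖(p.1:ℂ)*τ + (p.2:ℂ)‖) :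
    ∃ c : ℝ, ‖z‖ < c ∧
      ∀ p : ℤ × ℤ, p ≠ 0 → c ≤ ‖(p.1:ℂ)*τ + (p.2:ℂ)‖ := by
  set r0 := EisensteinSeries.r ⟨τ, hτ⟩ with hr0def
  have hr0 : 0 < r0 := EisensteinSeries.r_pos _
  set R : ℝ := 2 * ‖z‖ + 1 with hRdef
  set B : ℕ := max 1 ⌈R / r0⌉₊ with hBdef
  have hBge : R / r0 ≤ (B : ℝ) := (Nat.le_ceil _).trans (Nat.cast_le.mpr (le_max_right _ _))
  have hB1 : 1 ≤ B := le_max_left _ _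
  set F : Finset (ℤ × ℤ) := ((Finset.Icc (-(B:ℤ)) B) ×ˢ (Finset.Icc (-(B:ℤ)) B)).erase 0
    with hFdef
  have hFne : F.Nonempty := by
    refine ⟨(0, 1), Finset.mem_erase.mpr ⟨by simp [Prod.ext_iff], ?_⟩⟩
    rw [Finset.mem_product]
    constructor <;> rw [Finset.mem_Icc] <;> omega
  refine ⟨min R (F.inf' hFne fun p => ‖(p.1:ℂ)*τ + (p.2:ℂ)‖), ?_, ?_⟩
  · refine lt_min (by nlinarith [norm_nonneg z]) ?_
    rw [Finset.lt_inf'_iff]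
    intro p hp
    exact hlt p (Finset.ne_of_mem_erase hp)
  · intro p hp
    by_cases hpF : p ∈ F
    · exact (min_le_right _ _).trans (Finset.inf'_le _ hpF)
    · refine (min_le_left _ _).trans ?_
      have hout : B < p.1.natAbs ∨ B < p.2.natAbs := by
        by_contra hcon
        push_neg at hcon
        refine hpF (Finset.mem_erase.mpr ⟨hp, Finset.mem_product.mpr ⟨?_, ?_⟩⟩) <;>
          rw [Finset.mem_Icc] <;> omega
      have hN : (B:ℝ) ≤ ((max p.1.natAbs p.2.natAbs : ℕ) : ℝ) := by
        have : B ≤ max p.1.natAbs p.2.natAbs := by omega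
        exact_mod_cast this
      calc R ≤ r0 * B := by rw [div_le_iff₀ hr0] at hBge; linarith
        _ ≤ r0 * ((max p.1.natAbs p.2.natAbs : ℕ) : ℝ) := by nlinarith
        _ ≤ _ := omega_lower hτ hp

lemma summable_N3 : Summable (fun p : {p : ℤ × ℤ // p ≠ 0} =>
    (((max p.1.1.natAbs p.1.2.natAbs : ℕ) : ℝ)^3)⁻¹) := by
  have h0 := EisensteinSeries.summable_one_div_norm_rpow (k := 3) (by norm_num)
  have hinj : Function.Injective
      (fun p : {p : ℤ × ℤ // p ≠ 0} => (![p.1.1, p.1.2] : Fin 2 → ℤ)) := by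
    intro a b hab
    have h0 := congrFun hab 0
    have h1 := congrFun hab 1
    simp at h0 h1
    exact Subtype.ext (Prod.ext h0 h1)
  have h1 := h0.comp_injective hinj
  refine h1.congr fun p => ?_
  simp only [Function.comp_apply, EisensteinSeries.norm_eq_max_natAbs]
  rw [show (-(3:ℝ)) = ((-3 : ℤ) : ℝ) by norm_num, Real.rpow_intCast]
  rw [zpow_neg]
  congr 1

lemma summable_a {τ : ℂ} (hτ : 0 < τ.im) {z : ℂ} (hz : z ≠ 0)
    (hlt : ∀ p : ℤ × ℤ, p ≠ 0 → ‖z‖ < ‖(p.1:ℂ)*τ + (p.2:ℂ)‖) :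
    Summable (fun q : {p : ℤ × ℤ // p ≠ 0} × ℕ =>
      (-1:ℂ)^(q.2+1) * ((q.2:ℂ)+2) * z^(q.2+1) / ((q.1.1.1:ℂ)*τ + (q.1.1.2:ℂ))^(q.2+3)) := by
  obtain ⟨c, hzc, hcle⟩ := exists_unif_bound hτ hlt
  have hc0 : 0 < c := lt_of_le_of_lt (norm_nonneg z) hzc
  set r0 := EisensteinSeries.r ⟨τ, hτ⟩ with hr0def
  have hr0 : 0 < r0 := EisensteinSeries.r_pos _
  set t : ℝ := ‖z‖ / c with htdef
  have ht1 : t < 1 := (div_lt_one hc0).mpr hzc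
  have ht0 : 0 ≤ t := by positivity
  have hSn : Summable (fun n : ℕ => ((n:ℝ)+2) * t^n) := by
    have hnorm : ‖t‖ < 1 := by rwa [Real.norm_eq_abs, _root_.abs_of_nonneg ht0]
    have h1 := summable_pow_mul_geometric_of_norm_lt_one 1 hnorm
    have h2 := summable_geometric_of_norm_lt_one hnorm
    refine ((h1.add (h2.mul_left 2)).congr fun n => ?_)
    push_cast
    ring
  set C : ℝ := ‖z‖ / r0^3 with hCdef
  have hprod := ((summable_N3.mul_left C).mul_of_nonneg hSn
    (fun p => by positivity) (fun n => by positivity))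
  apply Summable.of_norm
  refine Summable.of_nonneg_of_le (fun q => norm_nonneg _) ?_ hprod
  rintro ⟨p, n⟩
  set N : ℝ := ((max p.1.1.natAbs p.1.2.natAbs : ℕ) : ℝ) with hNdef
  have hN1 : (1:ℝ) ≤ N := by
    rw [hNdef]
    exact_mod_cast natAbs_max_pos p.2
  set w : ℝ := ‖(p.1.1:ℂ)*τ + (p.1.2:ℂ)‖ with hwdef
  have hcw : c ≤ w := hcle p.1 p.2
  have hw0 : 0 < w := lt_of_lt_of_le hc0 hcw
  have hrw : r0 * N ≤ w := omega_lower hτ p.2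
  have htpos : 0 < t := div_pos (norm_pos_iff.mpr hz) hc0
  have hnorm : ‖(-1:ℂ)^(n+1) * ((n:ℂ)+2) * z^(n+1) / ((p.1.1:ℂ)*τ + (p.1.2:ℂ))^(n+3)‖
      = ((n:ℝ)+2) * (‖z‖)^(n+1) / w^(n+3) := by
    rw [show ((n:ℂ)+2) = ((n+2:ℕ):ℂ) by push_cast; ring]
    rw [norm_div, norm_mul, norm_mul, norm_pow, norm_pow, norm_pow,
      Complex.norm_natCast, ← hwdef]
    push_cast
    norm_num
  rw [hnorm]
  have key1 : ‖z‖ / w ≤ t := by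
    rw [htdef]
    gcongr
  have hq1 : (‖z‖ / w / t)^n ≤ 1 :=
    pow_le_one₀ (by positivity) ((div_le_one htpos).mpr key1)
  calc ((n:ℝ)+2) * (‖z‖)^(n+1) / w^(n+3)
      = (((n:ℝ)+2) * t^n) * (‖z‖ / w^3) * ((‖z‖ / w / t)^n) := by
        have hw' : w ≠ 0 := hw0.ne'
        have ht' : t ≠ 0 := htpos.ne'
        clear_value t w
        rw [div_pow, div_pow]
        field_simp
        ring
    _ ≤ (((n:ℝ)+2) * t^n) * (‖z‖ / (r0*N)^3) * 1 := by
        gcongr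
        all_goals first
          | positivity
          | exact pow_le_pow_left₀ (by positivity) hrw 3
          | exact hq1
    _ = C * (N^3)⁻¹ * (((n:ℝ)+2) * t^n) := by
        rw [hCdef, mul_pow]
        field_simp

/-- (a) For |z| < |ω|, 1/(z+ω)² − 1/ω² = ∑_{n≥1} (−1)ⁿ(n+1)zⁿ/ω^{n+2}; and
(b) the Laurent expansion ℘_τ(z) = 1/z² + 2∑_{j≥0} 𝓔_{2j+4}(τ) z^{2j+2} holds for
nonzero z closer to 0 than any nonzero lattice point of Λ_τ = τℤ + ℤ. -/
theorem weierstrass_laurent_expansion :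
    (∀ z ω : ℂ, ω ≠ 0 → ‖z‖ < ‖ω‖ →
      1 / (z + ω) ^ 2 - 1 / ω ^ 2 =
        ∑' n : ℕ, (-1 : ℂ) ^ (n + 1) * ((n : ℂ) + 2) * z ^ (n + 1) / ω ^ (n + 3)) ∧
    (∀ τ : ℂ, 0 < τ.im → ∀ z : ℂ, z ≠ 0 →
      (∀ p : ℤ × ℤ, p ≠ 0 →
        ‖z‖ < ‖(p.1 : ℂ) * τ + (p.2 : ℂ)‖) →
      1 / z ^ 2 +
          ∑' p : {p : ℤ × ℤ // p ≠ 0},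
            (1 / (z + ((p.1.1 : ℂ) * τ + (p.1.2 : ℂ))) ^ 2 -
              1 / ((p.1.1 : ℂ) * τ + (p.1.2 : ℂ)) ^ 2) =
        1 / z ^ 2 + 2 * ∑' j : ℕ, calE τ (2 * j + 4) * z ^ (2 * j + 2)) := by
  constructor
  · intro z ω hω h
    exact ((partA hω h).tsum_eq).symm
  · intro τ hτ z hz hlt
    congr 1
    have hω : ∀ p : {p : ℤ × ℤ // p ≠ 0}, ((p.1.1:ℂ)*τ + (p.1.2:ℂ)) ≠ 0 := by
      intro p hc
      have h1 := hlt p.1 p.2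
      rw [hc] at h1
      simp only [norm_zero] at h1
      exact (norm_nonneg z).not_gt h1
    set E : ℕ → ℂ :=
      fun m => ∑' p : {p : ℤ × ℤ // p ≠ 0}, ((p.1.1:ℂ)*τ + (p.1.2:ℂ))^(-(m:ℤ)) with hEdef
    have hEodd : ∀ m : ℕ, Odd m → E m = 0 := by
      intro m hm
      have hodd : Odd (-(m:ℤ)) := (by exact_mod_cast hm : Odd (m:ℤ)).neg
      set ν : {p : ℤ × ℤ // p ≠ 0} ≃ {p : ℤ × ℤ // p ≠ 0} :=
        (Equiv.neg (ℤ × ℤ)).subtypeEquiv (fun a => (neg_ne_zero (a := a)).symm) with hν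
      have h2 : E m = -E m := by
        have h1 := ν.tsum_eq
          (f := fun p : {p : ℤ × ℤ // p ≠ 0} => ((p.1.1:ℂ)*τ + (p.1.2:ℂ))^(-(m:ℤ)))
        have h3 : ∀ p : {p : ℤ × ℤ // p ≠ 0},
            (((ν p).1.1:ℂ)*τ + ((ν p).1.2:ℂ))^(-(m:ℤ))
              = -(((p.1.1:ℂ)*τ + (p.1.2:ℂ))^(-(m:ℤ))) := by
          intro p
          have hc : ((ν p).1 : ℤ × ℤ) = -(p.1) := rfl
          rw [hc]
          rw [show (((-(p.1)).1:ℂ))*τ + ((-(p.1)).2:ℂ) = -(((p.1.1:ℂ))*τ + (p.1.2:ℂ)) by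
            rw [Prod.fst_neg, Prod.snd_neg]; push_cast; ring]
          exact hodd.neg_zpow _
        calc E m = ∑' p : {p : ℤ × ℤ // p ≠ 0},
              (((ν p).1.1:ℂ)*τ + ((ν p).1.2:ℂ))^(-(m:ℤ)) := h1.symm
          _ = ∑' p : {p : ℤ × ℤ // p ≠ 0},
              -(((p.1.1:ℂ)*τ + (p.1.2:ℂ))^(-(m:ℤ))) := tsum_congr h3
          _ = -E m := tsum_neg
      linear_combination (1/2 : ℂ) * h2
    have hA := summable_a hτ hz hlt
    calc ∑' p : {p : ℤ × ℤ // p ≠ 0},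
          (1 / (z + ((p.1.1:ℂ)*τ + (p.1.2:ℂ)))^2 - 1 / ((p.1.1:ℂ)*τ + (p.1.2:ℂ))^2)
        = ∑' (p : {p : ℤ × ℤ // p ≠ 0}) (n : ℕ),
            (-1:ℂ)^(n+1) * ((n:ℂ)+2) * z^(n+1) / ((p.1.1:ℂ)*τ + (p.1.2:ℂ))^(n+3) :=
          tsum_congr fun p => ((partA (hω p) (hlt p.1 p.2)).tsum_eq).symm
      _ = ∑' (n : ℕ) (p : {p : ℤ × ℤ // p ≠ 0}),
            (-1:ℂ)^(n+1) * ((n:ℂ)+2) * z^(n+1) / ((p.1.1:ℂ)*τ + (p.1.2:ℂ))^(n+3) :=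
          Summable.tsum_comm hA.prod_symm
      _ = ∑' n : ℕ, ((-1:ℂ)^(n+1) * ((n:ℂ)+2) * z^(n+1)) * E (n+3) := by
          refine tsum_congr fun n => ?_
          rw [← tsum_mul_left]
          refine tsum_congr fun p => ?_
          rw [zpow_neg, zpow_natCast, div_eq_mul_inv]
      _ = ∑' j : ℕ, ((-1:ℂ)^((2*j+1)+1) * (((2*j+1:ℕ):ℂ)+2) * z^((2*j+1)+1)) * E ((2*j+1)+3) := by
          refine (Function.Injective.tsum_eq (g := fun j : ℕ => 2*j+1)
            (fun a b hab => by simp only at hab; omega) ?_).symm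
          intro n hn
          by_contra hc
          simp only [Set.mem_range, not_exists] at hc
          have hev : ∃ k, n = 2 * k := by
            rcases Nat.even_or_odd n with ⟨k, hk⟩ | ⟨k, hk⟩
            · exact ⟨k, by omega⟩
            · exact absurd hk.symm (hc k)
          obtain ⟨k, hk⟩ := hev
          have hE0 : E (n+3) = 0 := hEodd (n+3) ⟨k+1, by omega⟩
          exact hn (by beta_reduce; rw [hE0, mul_zero])
      _ = 2 * ∑' j : ℕ, calE τ (2*j+4) * z^(2*j+2) := by
          rw [← tsum_mul_left]
          refine tsum_congr fun j => ?_
          have hfold : calE τ (2*j+4) = (((2*j+4:ℕ):ℂ) - 1)/2 * E (2*j+4) := rfl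
          rw [hfold]
          rw [show (2*j+1)+3 = 2*j+4 from by ring]
          rw [show (-1:ℂ)^((2*j+1)+1) = 1 from Even.neg_one_pow ⟨j+1, by ring⟩]
          push_cast
          ring
end

section
/- As formal power series in q^{1/3}: let η⊥ = ∏_{n≥1}(1−q^{n/3})³/(1−qⁿ), and let η↖ and η↙ be the twists of η⊥ by q^{1/3} ↦ ωq^{1/3} and q^{1/3} ↦ ω̄q^{1/3} respectively, where ω = e^{2πi/3}. Then η↖ η↙ = η^{⊥⊤}, where η^{⊥⊤}(q) = ∏_{n∈ℕ∖3ℕ}(1−qⁿ)⁷ ∏_{n∈3ℕ}(1−qⁿ)⁴ / ∏_{n∈(1/3)ℕ∖ℕ}(1−qⁿ)³. -/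
open PowerSeries

/-- Twist of a power series by the substitution t ↦ c·t. -/
noncomputable def twist (c : ℂ) (f : PowerSeries ℂ) : PowerSeries ℂ :=
  PowerSeries.mk fun k => c ^ k * PowerSeries.coeff k f

/-- The truncation (first m+1 factors) of η⊥ = ∏_{n≥1}(1−tⁿ)³/(1−t^{3n}),
in the variable t = q^{1/3}. -/
noncomputable def etaBotTrunc (m : ℕ) : PowerSeries ℂ :=
  ∏ n ∈ Finset.range (m + 1),
    ((1 - (PowerSeries.X : PowerSeries ℂ) ^ (n + 1)) ^ 3 *
      (1 - (PowerSeries.X : PowerSeries ℂ) ^ (3 * (n + 1)))⁻¹)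

/-- The truncation of
η^{⊥⊤} = ∏_{n∈ℕ∖3ℕ}(1−qⁿ)⁷ · ∏_{n∈3ℕ}(1−qⁿ)⁴ / ∏_{n∈(1/3)ℕ∖ℕ}(1−qⁿ)³,
in the variable t = q^{1/3} (so q = t³). -/
noncomputable def etaBotTopTrunc (m : ℕ) : PowerSeries ℂ :=
  (∏ n ∈ Finset.range (m + 1),
      (if 3 ∣ (n + 1) then (1 - (PowerSeries.X : PowerSeries ℂ) ^ (3 * (n + 1))) ^ 4
        else (1 - (PowerSeries.X : PowerSeries ℂ) ^ (3 * (n + 1))) ^ 7)) *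
  ∏ n ∈ Finset.range (m + 1),
    (if 3 ∣ (n + 1) then 1
      else ((1 - (PowerSeries.X : PowerSeries ℂ) ^ (n + 1))⁻¹) ^ 3)


noncomputable def ωc : ℂ := Complex.exp (2 * Real.pi * Complex.I / 3)

lemma omega_cube : ωc ^ 3 = 1 := by
  rw [ωc, ← Complex.exp_nat_mul,
    show (3 : ℕ) * (2 * ↑Real.pi * Complex.I / 3) = 2 * ↑Real.pi * Complex.I by push_cast; ring]
  exact Complex.exp_two_pi_mul_I

lemma omega_ne_zero : ωc ≠ 0 := Complex.exp_ne_zero _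

lemma two_pi_I_ne_zero : (2 : ℂ) * ↑Real.pi * Complex.I ≠ 0 := by
  have : (Real.pi : ℂ) ≠ 0 := by exact_mod_cast Real.pi_ne_zero
  simp [this, Complex.I_ne_zero]

lemma omega_ne_one : ωc ≠ 1 := by
  intro h
  rw [ωc, Complex.exp_eq_one_iff] at h
  obtain ⟨n, hn⟩ := h
  have h1 : ((n : ℂ) * 3 - 1) * (2 * ↑Real.pi * Complex.I) = 0 := by linear_combination -3 * hn
  rcases mul_eq_zero.mp h1 with h2 | h2
  · have h3 : (n : ℂ) * 3 = 1 := by linear_combination h2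
    have : (n : ℤ) * 3 = 1 := by exact_mod_cast h3
    omega
  · exact two_pi_I_ne_zero h2

lemma omega_quad : ωc ^ 2 + ωc + 1 = 0 := by
  have h : (ωc - 1) * (ωc ^ 2 + ωc + 1) = 0 := by linear_combination omega_cube
  rcases mul_eq_zero.mp h with h2 | h2
  · exact absurd (by linear_combination h2) omega_ne_one
  · exact h2

lemma omega_mul_conj : ωc * (starRingEnd ℂ) ωc = 1 := by
  rw [ωc, ← Complex.exp_conj, ← Complex.exp_add]
  have hc : (starRingEnd ℂ) (2 * ↑Real.pi * Complex.I / 3) =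
      -(2 * ↑Real.pi * Complex.I / 3) := by
    simp only [map_div₀, map_mul, Complex.conj_I, Complex.conj_ofReal, map_ofNat]
    ring
  rw [hc, add_neg_cancel, Complex.exp_zero]

lemma conj_omega : (starRingEnd ℂ) ωc = ωc ^ 2 := by
  have h : ωc * (starRingEnd ℂ) ωc = ωc * ωc ^ 2 := by
    rw [omega_mul_conj]; linear_combination -omega_cube
  exact mul_left_cancel₀ omega_ne_zero h

lemma omega_pow_dvd {k : ℕ} (h : 3 ∣ k) : ωc ^ k = 1 := by
  obtain ⟨j, rfl⟩ := h
  rw [pow_mul, omega_cube, one_pow]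

lemma conj_omega_pow_dvd {k : ℕ} (h : 3 ∣ k) : ((starRingEnd ℂ) ωc) ^ k = 1 := by
  rw [← map_pow, omega_pow_dvd h, map_one]

lemma omega_pow_mul_conj (k : ℕ) : ωc ^ k * ((starRingEnd ℂ) ωc) ^ k = 1 := by
  rw [← mul_pow, omega_mul_conj, one_pow]

lemma omega_pow_mod (j : ℕ) : ωc ^ j = ωc ^ (j % 3) := by
  conv_lhs => rw [show j = 3 * (j / 3) + j % 3 by omega]
  rw [pow_add, pow_mul, omega_cube, one_pow, one_mul]

lemma omega_pow_add_conj {k : ℕ} (h : ¬ 3 ∣ k) :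
    ωc ^ k + ((starRingEnd ℂ) ωc) ^ k = -1 := by
  rw [conj_omega, ← pow_mul, omega_pow_mod k, omega_pow_mod (2 * k)]
  have hr : k % 3 = 1 ∧ (2 * k) % 3 = 2 ∨ k % 3 = 2 ∧ (2 * k) % 3 = 1 := by omega
  rcases hr with ⟨h1, h2⟩ | ⟨h1, h2⟩ <;> rw [h1, h2] <;> linear_combination omega_quad

lemma twist_eq_rescale (c : ℂ) (f : PowerSeries ℂ) : twist c f = rescale c f := by
  ext k
  simp [twist, coeff_mk, coeff_rescale]

lemma constCoeff_one_sub_X_pow (k : ℕ) (hk : k ≠ 0) :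
    constantCoeff (1 - (X : PowerSeries ℂ) ^ k) = 1 := by
  simp [hk, map_sub, map_pow, constantCoeff_X, zero_pow]

lemma one_sub_X_pow_ne_zero (k : ℕ) (hk : k ≠ 0) :
    (1 - (X : PowerSeries ℂ) ^ k) ≠ 0 := by
  intro h
  have := constCoeff_one_sub_X_pow k hk
  rw [h, map_zero] at this
  exact one_ne_zero this.symm

lemma constCoeff_rescale (c : ℂ) (f : PowerSeries ℂ) :
    constantCoeff (rescale c f) = constantCoeff f := by
  rw [← coeff_zero_eq_constantCoeff_apply, ← coeff_zero_eq_constantCoeff_apply,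
    coeff_rescale, pow_zero, one_mul]

lemma rescale_inv (c : ℂ) {f : PowerSeries ℂ} (hf : constantCoeff f ≠ 0) :
    rescale c f⁻¹ = (rescale c f)⁻¹ := by
  have h2 : constantCoeff (rescale c f) ≠ 0 := by rwa [constCoeff_rescale]
  rw [PowerSeries.eq_inv_iff_mul_eq_one h2, ← map_mul, PowerSeries.inv_mul_cancel f hf, map_one]

lemma X_pow_dvd_prod_sub_one {N : ℕ} {s : Finset ℕ} {f : ℕ → PowerSeries ℂ}
    (h : ∀ i ∈ s, (X : PowerSeries ℂ) ^ N ∣ f i - 1) :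
    (X : PowerSeries ℂ) ^ N ∣ (∏ i ∈ s, f i) - 1 := by
  classical
  induction s using Finset.cons_induction with
  | empty => simp
  | cons a s ha ih =>
    rw [Finset.prod_cons]
    have h1 : (X : PowerSeries ℂ) ^ N ∣ f a - 1 := h a (Finset.mem_cons_self a s)
    have h2 := ih fun i hi => h i (Finset.mem_cons_of_mem hi)
    have : f a * ∏ i ∈ s, f i - 1 =
        f a * ((∏ i ∈ s, f i) - 1) + (f a - 1) := by ring
    rw [this]
    exact dvd_add (Dvd.dvd.mul_left h2 _) h1

lemma X_pow_dvd_pow_sub_one (N j n : ℕ) (hj : N ≤ j) :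
    (X : PowerSeries ℂ) ^ N ∣ (1 - (X : PowerSeries ℂ) ^ j) ^ n - 1 := by
  have h1 : (X : PowerSeries ℂ) ^ N ∣ (1 - (X : PowerSeries ℂ) ^ j) - 1 := by
    have : (1 - (X : PowerSeries ℂ) ^ j) - 1 = -(X ^ j) := by ring
    rw [this]
    exact (pow_dvd_pow X hj).trans (dvd_neg.mpr dvd_rfl)
  calc (X : PowerSeries ℂ) ^ N ∣ (1 - (X : PowerSeries ℂ) ^ j) - 1 := h1
    _ ∣ (1 - (X : PowerSeries ℂ) ^ j) ^ n - 1 ^ n := sub_dvd_pow_sub_pow _ 1 n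
    _ = (1 - (X : PowerSeries ℂ) ^ j) ^ n - 1 := by rw [one_pow]

lemma prod_if_three_dvd (f : ℕ → PowerSeries ℂ) (M : ℕ) :
    ∏ n ∈ Finset.range M, (if 3 ∣ (n + 1) then f (n + 1) else 1)
      = ∏ j ∈ Finset.range (M / 3), f (3 * (j + 1)) := by
  induction M with
  | zero => simp
  | succ M ih =>
    rw [Finset.prod_range_succ, ih, Nat.succ_div]
    by_cases h : 3 ∣ (M + 1)
    · rw [if_pos h, if_pos h, Finset.prod_range_succ]
      have h2 : M + 1 = 3 * (M / 3 + 1) := by omega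
      rw [← h2]
    · rw [if_neg h, if_neg h, add_zero, mul_one]

lemma factor_id (k : ℕ) (hk : k ≠ 0) :
    ((1 - C (ωc ^ k) * X ^ k) ^ 3 * (1 - (X : PowerSeries ℂ) ^ (3 * k))⁻¹) *
        ((1 - C (((starRingEnd ℂ) ωc) ^ k) * X ^ k) ^ 3 *
          (1 - (X : PowerSeries ℂ) ^ (3 * k))⁻¹) *
        (1 - (X : PowerSeries ℂ) ^ (3 * k)) ^ 6 =
      ((if 3 ∣ k then (1 - (X : PowerSeries ℂ) ^ (3 * k)) ^ 4
          else (1 - (X : PowerSeries ℂ) ^ (3 * k)) ^ 7) *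
        (if 3 ∣ k then 1 else ((1 - (X : PowerSeries ℂ) ^ k)⁻¹) ^ 3)) *
        (if 3 ∣ k then (1 - (X : PowerSeries ℂ) ^ k) ^ 6 else 1) := by
  have h3k : 3 * k ≠ 0 := by omega
  have hu0 : constantCoeff (1 - (X : PowerSeries ℂ) ^ (3 * k)) ≠ 0 := by
    rw [constCoeff_one_sub_X_pow _ h3k]; exact one_ne_zero
  have hu : (1 - (X : PowerSeries ℂ) ^ (3 * k))⁻¹ * (1 - (X : PowerSeries ℂ) ^ (3 * k)) = 1 :=
    PowerSeries.inv_mul_cancel _ hu0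
  by_cases h : 3 ∣ k
  · rw [if_pos h, if_pos h, if_pos h, omega_pow_dvd h, conj_omega_pow_dvd h, map_one]
    have e : ((1 - (1 : ℂ⟦X⟧) * X ^ k) ^ 3 * (1 - (X : PowerSeries ℂ) ^ (3 * k))⁻¹) *
        ((1 - (1 : ℂ⟦X⟧) * X ^ k) ^ 3 * (1 - (X : PowerSeries ℂ) ^ (3 * k))⁻¹) *
        (1 - (X : PowerSeries ℂ) ^ (3 * k)) ^ 6 =
        ((1 - (X : PowerSeries ℂ) ^ (3 * k))⁻¹ * (1 - (X : PowerSeries ℂ) ^ (3 * k))) *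
        (((1 - (X : PowerSeries ℂ) ^ (3 * k))⁻¹ * (1 - (X : PowerSeries ℂ) ^ (3 * k))) *
          ((1 - (X : PowerSeries ℂ) ^ (3 * k)) ^ 4 * (1 - X ^ k) ^ 6)) := by ring
    rw [e, hu]; ring
  · rw [if_neg h, if_neg h, if_neg h]
    have hw0 : constantCoeff (1 - (X : PowerSeries ℂ) ^ k) ≠ 0 := by
      rw [constCoeff_one_sub_X_pow _ hk]; exact one_ne_zero
    have hw : (1 - (X : PowerSeries ℂ) ^ k)⁻¹ * (1 - (X : PowerSeries ℂ) ^ k) = 1 :=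
      PowerSeries.inv_mul_cancel _ hw0
    have hX3 : (X : ℂ⟦X⟧) ^ (3 * k) = (X ^ k) ^ 3 := by rw [mul_comm, pow_mul]
    have hP : (1 - (X : PowerSeries ℂ) ^ k) * (1 + X ^ k + X ^ k * X ^ k) =
        1 - (X : PowerSeries ℂ) ^ (3 * k) := by rw [hX3]; ring
    have hs : (1 - C (ωc ^ k) * X ^ k) *
        (1 - C (((starRingEnd ℂ) ωc) ^ k) * X ^ k) =
        1 + (X : ℂ⟦X⟧) ^ k + X ^ k * X ^ k := by
      have h1 : C (ωc ^ k) * C (((starRingEnd ℂ) ωc) ^ k) = 1 := by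
        rw [← map_mul, omega_pow_mul_conj, map_one]
      have h2 : C (ωc ^ k) + C (((starRingEnd ℂ) ωc) ^ k) = -1 := by
        rw [← map_add, omega_pow_add_conj h, map_neg, map_one]
      linear_combination ((X : ℂ⟦X⟧) ^ k * X ^ k) * h1 - (X : ℂ⟦X⟧) ^ k * h2
    have hcne : (1 - (X : PowerSeries ℂ) ^ k) ^ 3 *
        (1 - (X : PowerSeries ℂ) ^ (3 * k)) ^ 2 ≠ 0 :=
      mul_ne_zero (pow_ne_zero _ (one_sub_X_pow_ne_zero k hk))
        (pow_ne_zero _ (one_sub_X_pow_ne_zero _ h3k))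
    apply mul_right_cancel₀ hcne
    have hL : ((1 - C (ωc ^ k) * X ^ k) ^ 3 * (1 - (X : PowerSeries ℂ) ^ (3 * k))⁻¹) *
        ((1 - C (((starRingEnd ℂ) ωc) ^ k) * X ^ k) ^ 3 *
          (1 - (X : PowerSeries ℂ) ^ (3 * k))⁻¹) *
        (1 - (X : PowerSeries ℂ) ^ (3 * k)) ^ 6 *
        ((1 - (X : PowerSeries ℂ) ^ k) ^ 3 * (1 - (X : PowerSeries ℂ) ^ (3 * k)) ^ 2) =
        (1 - (X : PowerSeries ℂ) ^ (3 * k)) ^ 9 := by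
      calc ((1 - C (ωc ^ k) * X ^ k) ^ 3 * (1 - (X : PowerSeries ℂ) ^ (3 * k))⁻¹) *
            ((1 - C (((starRingEnd ℂ) ωc) ^ k) * X ^ k) ^ 3 *
              (1 - (X : PowerSeries ℂ) ^ (3 * k))⁻¹) *
            (1 - (X : PowerSeries ℂ) ^ (3 * k)) ^ 6 *
            ((1 - (X : PowerSeries ℂ) ^ k) ^ 3 * (1 - (X : PowerSeries ℂ) ^ (3 * k)) ^ 2) =
          ((1 - C (ωc ^ k) * X ^ k) *
            (1 - C (((starRingEnd ℂ) ωc) ^ k) * X ^ k)) ^ 3 *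
            (((1 - (X : PowerSeries ℂ) ^ (3 * k))⁻¹ * (1 - (X : PowerSeries ℂ) ^ (3 * k))) *
              ((1 - (X : PowerSeries ℂ) ^ (3 * k))⁻¹ * (1 - (X : PowerSeries ℂ) ^ (3 * k)))) *
            ((1 - (X : PowerSeries ℂ) ^ k) ^ 3 * (1 - (X : PowerSeries ℂ) ^ (3 * k)) ^ 6) := by
            ring
        _ = ((1 - (X : PowerSeries ℂ) ^ k) * (1 + X ^ k + X ^ k * X ^ k)) ^ 3 *
            (1 - (X : PowerSeries ℂ) ^ (3 * k)) ^ 6 := by rw [hs, hu]; ring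
        _ = (1 - (X : PowerSeries ℂ) ^ (3 * k)) ^ 9 := by rw [hP]; ring
    have hR : ((1 - (X : PowerSeries ℂ) ^ (3 * k)) ^ 7 *
          ((1 - (X : PowerSeries ℂ) ^ k)⁻¹) ^ 3) * 1 *
        ((1 - (X : PowerSeries ℂ) ^ k) ^ 3 * (1 - (X : PowerSeries ℂ) ^ (3 * k)) ^ 2) =
        (1 - (X : PowerSeries ℂ) ^ (3 * k)) ^ 9 := by
      have e : ((1 - (X : PowerSeries ℂ) ^ (3 * k)) ^ 7 *
            ((1 - (X : PowerSeries ℂ) ^ k)⁻¹) ^ 3) * 1 *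
          ((1 - (X : PowerSeries ℂ) ^ k) ^ 3 * (1 - (X : PowerSeries ℂ) ^ (3 * k)) ^ 2) =
          ((1 - (X : PowerSeries ℂ) ^ k)⁻¹ * (1 - (X : PowerSeries ℂ) ^ k)) ^ 3 *
            (1 - (X : PowerSeries ℂ) ^ (3 * k)) ^ 9 := by ring
      rw [e, hw]; ring
    rw [hL, hR]

lemma rescale_etaBotTrunc (c : ℂ) (hc : c ^ 3 = 1) (m : ℕ) :
    rescale c (etaBotTrunc m) = ∏ n ∈ Finset.range (m + 1),
      ((1 - C (c ^ (n + 1)) * X ^ (n + 1)) ^ 3 *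
        (1 - (X : PowerSeries ℂ) ^ (3 * (n + 1)))⁻¹) := by
  rw [etaBotTrunc, map_prod]
  refine Finset.prod_congr rfl fun n _ => ?_
  have hcc : constantCoeff (1 - (X : PowerSeries ℂ) ^ (3 * (n + 1))) ≠ 0 := by
    rw [constCoeff_one_sub_X_pow _ (by omega)]; exact one_ne_zero
  rw [map_mul, rescale_inv c hcc]
  simp only [map_sub, map_one, map_pow, rescale_X]
  rw [mul_pow, mul_pow, ← map_pow, ← map_pow, pow_mul c, hc, one_pow, map_one, one_mul]

lemma prod_if_three_dvd6 (M : ℕ) :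
    ∏ n ∈ Finset.range M,
        (if 3 ∣ (n + 1) then (1 - (X : PowerSeries ℂ) ^ (n + 1)) ^ 6 else 1)
      = ∏ j ∈ Finset.range (M / 3), (1 - (X : PowerSeries ℂ) ^ (3 * (j + 1))) ^ 6 :=
  prod_if_three_dvd (fun k => (1 - (X : PowerSeries ℂ) ^ k) ^ 6) M

/-- η↖ · η↙ = η^{⊥⊤}: the product of the twists of η⊥ by t ↦ ωt and t ↦ ω̄t
(ω = e^{2πi/3}) equals η^{⊥⊤}, stated coefficientwise via truncations. -/
theorem etaNW_mul_etaSW (m : ℕ) :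
    PowerSeries.coeff m
        (twist (Complex.exp (2 * Real.pi * Complex.I / 3)) (etaBotTrunc m) *
          twist (starRingEnd ℂ (Complex.exp (2 * Real.pi * Complex.I / 3)))
            (etaBotTrunc m)) =
      PowerSeries.coeff m (etaBotTopTrunc m) := by
  have hcc3 : ((starRingEnd ℂ) ωc) ^ 3 = 1 := by rw [← map_pow, omega_cube, map_one]
  rw [show Complex.exp (2 * Real.pi * Complex.I / 3) = ωc from rfl,
    twist_eq_rescale, twist_eq_rescale, rescale_etaBotTrunc _ omega_cube m,
    rescale_etaBotTrunc _ hcc3 m, ← Finset.prod_mul_distrib]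
  set G : PowerSeries ℂ := ∏ n ∈ Finset.range (m + 1),
      ((1 - C (ωc ^ (n + 1)) * X ^ (n + 1)) ^ 3 *
          (1 - (X : PowerSeries ℂ) ^ (3 * (n + 1)))⁻¹ *
        ((1 - C (((starRingEnd ℂ) ωc) ^ (n + 1)) * X ^ (n + 1)) ^ 3 *
          (1 - (X : PowerSeries ℂ) ^ (3 * (n + 1)))⁻¹)) with hG
  have key : G * ∏ n ∈ Finset.range (m + 1),
        (1 - (X : PowerSeries ℂ) ^ (3 * (n + 1))) ^ 6 =
      etaBotTopTrunc m * ∏ n ∈ Finset.range (m + 1),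
        (if 3 ∣ (n + 1) then (1 - (X : PowerSeries ℂ) ^ (n + 1)) ^ 6 else 1) := by
    rw [hG, etaBotTopTrunc, ← Finset.prod_mul_distrib, ← Finset.prod_mul_distrib,
      ← Finset.prod_mul_distrib]
    exact Finset.prod_congr rfl fun n _ => factor_id (n + 1) (Nat.succ_ne_zero n)
  rw [prod_if_three_dvd6 (m + 1)] at key
  have h1 : (m + 1) / 3 ≤ m + 1 := Nat.div_le_self _ _
  have hsplit : ∏ n ∈ Finset.range (m + 1), (1 - (X : PowerSeries ℂ) ^ (3 * (n + 1))) ^ 6 =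
      (∏ n ∈ Finset.range ((m + 1) / 3), (1 - (X : PowerSeries ℂ) ^ (3 * (n + 1))) ^ 6) *
        ∏ n ∈ Finset.Ico ((m + 1) / 3) (m + 1),
          (1 - (X : PowerSeries ℂ) ^ (3 * (n + 1))) ^ 6 := by
    rw [Finset.range_eq_Ico,
      ← Finset.prod_Ico_consecutive _ (Nat.zero_le ((m + 1) / 3)) h1, ← Finset.range_eq_Ico]
  rw [hsplit] at key
  have hprodne : (∏ n ∈ Finset.range ((m + 1) / 3),
      (1 - (X : PowerSeries ℂ) ^ (3 * (n + 1))) ^ 6) ≠ 0 :=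
    Finset.prod_ne_zero_iff.mpr fun n _ =>
      pow_ne_zero _ (one_sub_X_pow_ne_zero _ (by omega))
  have key2 : G * ∏ n ∈ Finset.Ico ((m + 1) / 3) (m + 1),
      (1 - (X : PowerSeries ℂ) ^ (3 * (n + 1))) ^ 6 = etaBotTopTrunc m := by
    apply mul_right_cancel₀ hprodne
    calc (G * ∏ n ∈ Finset.Ico ((m + 1) / 3) (m + 1),
            (1 - (X : PowerSeries ℂ) ^ (3 * (n + 1))) ^ 6) *
          ∏ n ∈ Finset.range ((m + 1) / 3), (1 - (X : PowerSeries ℂ) ^ (3 * (n + 1))) ^ 6 =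
        G * ((∏ n ∈ Finset.range ((m + 1) / 3),
            (1 - (X : PowerSeries ℂ) ^ (3 * (n + 1))) ^ 6) *
          ∏ n ∈ Finset.Ico ((m + 1) / 3) (m + 1),
            (1 - (X : PowerSeries ℂ) ^ (3 * (n + 1))) ^ 6) := by ring
      _ = etaBotTopTrunc m *
          ∏ n ∈ Finset.range ((m + 1) / 3), (1 - (X : PowerSeries ℂ) ^ (3 * (n + 1))) ^ 6 :=
        key
  have hW : (X : PowerSeries ℂ) ^ (m + 1) ∣
      (∏ n ∈ Finset.Ico ((m + 1) / 3) (m + 1),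
        (1 - (X : PowerSeries ℂ) ^ (3 * (n + 1))) ^ 6) - 1 :=
    X_pow_dvd_prod_sub_one fun i hi =>
      X_pow_dvd_pow_sub_one _ _ _ (by
        have := (Finset.mem_Ico.mp hi).1
        omega)
  rw [← key2]
  have hsum : G * ∏ n ∈ Finset.Ico ((m + 1) / 3) (m + 1),
      (1 - (X : PowerSeries ℂ) ^ (3 * (n + 1))) ^ 6 =
      G + G * ((∏ n ∈ Finset.Ico ((m + 1) / 3) (m + 1),
        (1 - (X : PowerSeries ℂ) ^ (3 * (n + 1))) ^ 6) - 1) := by ring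
  rw [hsum, map_add]
  have hz : coeff m (G * ((∏ n ∈ Finset.Ico ((m + 1) / 3) (m + 1),
      (1 - (X : PowerSeries ℂ) ^ (3 * (n + 1))) ^ 6) - 1)) = 0 :=
    PowerSeries.X_pow_dvd_iff.mp (Dvd.dvd.mul_left hW G) m (Nat.lt_succ_self m)
  rw [hz, add_zero]
end
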